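/- Under the stated setting, if m̃ ∈ ℝ^N is any vector of approximate moments and w̃ = D V m̃ the corresponding approximate weights, then ‖w − w̃‖₁ ≤ √(λ(B)) · ‖m − m̃‖₂, where w = D V m. -/

import Mathlib

/-!
The weight difference is `w - w̃ = D V (m - m̃)`. Since the quadrature is exact in degree `2n`,
the discrete Gram matrix `Vᵀ D V` equals the continuous one, i.e. the identity, so
`∑ uᵢ ((V (m - m̃))ᵢ)² = ‖m - m̃‖₂²`. Weighted Cauchy–Schwarz then bounds
`‖D V (m - m̃)‖₁ = ∑ uᵢ |(V (m - m̃))ᵢ|` by `√(∑ uᵢ) ‖m - m̃‖₂`, and exactness on constants gives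
`∑ uᵢ = λ(B)`.
-/

open MeasureTheory MvPolynomial

theorem Finset.sum_mul_abs_le_sqrt_mul_sqrt {ι : Type*} [Fintype ι] {u : ι → ℝ}
    (hu : ∀ i, 0 ≤ u i) (s : ι → ℝ) :
    ∑ i, u i * |s i| ≤ √(∑ i, u i) * √(∑ i, u i * s i ^ 2) := by
  rw [← Real.sqrt_mul (Finset.sum_nonneg fun i _ => hu i)]
  refine Real.le_sqrt_of_sq_le (Finset.sum_sq_le_sum_mul_sum_of_sq_le_mul _
    (fun i _ => hu i) (fun i _ => mul_nonneg (hu i) (sq_nonneg _)) fun i _ => le_of_eq ?_)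
  rw [mul_pow, sq_abs]
  ring

theorem Finset.sum_mul_sq_sum_eq_sum_sq_of_orthonormal {ι κ R : Type*} [Fintype ι] [Fintype κ]
    [DecidableEq κ] [CommRing R] {u : ι → R} {V : ι → κ → R}
    (hV : ∀ h k, ∑ i, u i * (V i h * V i k) = if h = k then 1 else 0) (c : κ → R) :
    ∑ i, u i * (∑ j, V i j * c j) ^ 2 = ∑ j, c j ^ 2 := by
  calc ∑ i, u i * (∑ j, V i j * c j) ^ 2
      = ∑ i, ∑ j, ∑ k, c j * c k * (u i * (V i j * V i k)) := by
        refine Finset.sum_congr rfl fun i _ => ?_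
        rw [sq, Finset.sum_mul_sum, Finset.mul_sum]
        exact Finset.sum_congr rfl fun j _ => by
          rw [Finset.mul_sum]
          exact Finset.sum_congr rfl fun k _ => by ring
    _ = ∑ j, ∑ k, c j * c k * ∑ i, u i * (V i j * V i k) := by
        rw [Finset.sum_comm]
        simp only [Finset.mul_sum]
        exact Finset.sum_congr rfl fun j _ => Finset.sum_comm
    _ = ∑ j, c j ^ 2 := by simp [hV, sq]

theorem sum_mul_eval_mul_eval_eq_of_orthonormal {σ ι κ : Type*} [Fintype ι] [DecidableEq κ]
    {n : ℕ} (lam : Measure (σ → ℝ)) (B : Set (σ → ℝ)) {p : κ → MvPolynomial σ ℝ}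
    (hdeg : ∀ j, (p j).totalDegree ≤ n)
    (horth : ∀ h k, ∫ x in B, eval x (p h) * eval x (p k) ∂lam = if h = k then 1 else 0)
    {X : ι → σ → ℝ} {u : ι → ℝ}
    (hquad : ∀ q : MvPolynomial σ ℝ, q.totalDegree ≤ 2 * n →
      ∫ x in B, eval x q ∂lam = ∑ i, u i * eval (X i) q) (h k : κ) :
    ∑ i, u i * (eval (X i) (p h) * eval (X i) (p k)) = if h = k then 1 else 0 := by
  have hdeg_mul : (p h * p k).totalDegree ≤ 2 * n :=
    (totalDegree_mul _ _).trans (by linarith [hdeg h, hdeg k])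
  simpa only [eval_mul, horth] using (hquad _ hdeg_mul).symm

theorem cheap_rule_perturbed_weights_bound_general {d n M N : ℕ}
    (lam : Measure (Fin d → ℝ))
    (B : Set (Fin d → ℝ))
    (p : Fin N → MvPolynomial (Fin d) ℝ)
    (hdeg : ∀ j, (p j).totalDegree ≤ n)
    (horth : ∀ h k, ∫ x in B, eval x (p h) * eval x (p k) ∂lam
      = if h = k then 1 else 0)
    (X : Fin M → (Fin d → ℝ)) (u : Fin M → ℝ)
    (hu : ∀ i, 0 < u i)
    (hquad : ∀ q : MvPolynomial (Fin d) ℝ, q.totalDegree ≤ 2 * n →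
      ∫ x in B, eval x q ∂lam = ∑ i, u i * eval (X i) q)
    (m : Fin N → ℝ)
    (mt : Fin N → ℝ)
    (w : Fin M → ℝ) (hw : ∀ i, w i = u i * ∑ j, eval (X i) (p j) * m j)
    (wt : Fin M → ℝ) (hwt : ∀ i, wt i = u i * ∑ j, eval (X i) (p j) * mt j) :
    ∑ i, |w i - wt i|
      ≤ Real.sqrt (lam B).toReal * Real.sqrt (∑ j, (m j - mt j) ^ 2) := by
  have hmass : ∑ i, u i = (lam B).toReal := by
    simpa [setIntegral_const, Measure.real] using (hquad 1 (by simp)).symm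
  have hgram := sum_mul_eval_mul_eval_eq_of_orthonormal lam B hdeg horth hquad
  have hdiff : ∀ i, |w i - wt i| = u i * |∑ j, eval (X i) (p j) * (m j - mt j)| := fun i => by
    simp only [hw, hwt, ← mul_sub, ← Finset.sum_sub_distrib, abs_mul, abs_of_pos (hu i)]
  calc ∑ i, |w i - wt i|
      = ∑ i, u i * |∑ j, eval (X i) (p j) * (m j - mt j)| := Finset.sum_congr rfl fun i _ => hdiff i
    _ ≤ √(∑ i, u i) * √(∑ i, u i * (∑ j, eval (X i) (p j) * (m j - mt j)) ^ 2) :=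
      Finset.sum_mul_abs_le_sqrt_mul_sqrt (fun i => (hu i).le) _
    _ = √(lam B).toReal * √(∑ j, (m j - mt j) ^ 2) := by
      rw [hmass, Finset.sum_mul_sq_sum_eq_sum_sq_of_orthonormal hgram]

/-- Moment-perturbation stability: if `w̃ = D V m̃` are the approximate weights
corresponding to approximate moments `m̃`, then
`‖w − w̃‖₁ ≤ √(λ(B)) ‖m − m̃‖₂`. -/
theorem cheap_rule_perturbed_weights_bound {d n M N : ℕ} (hMN : N ≤ M)
    (hN : N = Nat.choose (n + d) d)
    (μ lam : Measure (Fin d → ℝ)) [IsFiniteMeasure μ] [IsFiniteMeasure lam]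
    (Ω B : Set (Fin d → ℝ))
    (p : Fin N → MvPolynomial (Fin d) ℝ)
    (hdeg : ∀ j, (p j).totalDegree ≤ n)
    (horth : ∀ h k, ∫ x in B, eval x (p h) * eval x (p k) ∂lam
      = if h = k then 1 else 0)
    (X : Fin M → (Fin d → ℝ)) (u : Fin M → ℝ)
    (hX : ∀ i, X i ∈ B) (hu : ∀ i, 0 < u i)
    (hquad : ∀ q : MvPolynomial (Fin d) ℝ, q.totalDegree ≤ 2 * n →
      ∫ x in B, eval x q ∂lam = ∑ i, u i * eval (X i) q)
    (m : Fin N → ℝ) (hm : ∀ j, m j = ∫ x in Ω, eval x (p j) ∂μ)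
    (mt : Fin N → ℝ)
    (w : Fin M → ℝ) (hw : ∀ i, w i = u i * ∑ j, eval (X i) (p j) * m j)
    (wt : Fin M → ℝ) (hwt : ∀ i, wt i = u i * ∑ j, eval (X i) (p j) * mt j) :
    ∑ i, |w i - wt i|
      ≤ Real.sqrt (lam B).toReal * Real.sqrt (∑ j, (m j - mt j) ^ 2) :=
  cheap_rule_perturbed_weights_bound_general lam B p hdeg horth X u hu hquad m mt w hw wt hwt
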